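/- Let w be an element of minimal length in its conjugacy class in a finite Coxeter group W, J = J(w), and suppose M ≤ N_W(W_J) is a subgroup centralizing w with W_J M = N_W(W_J) and M ∩ W_J = 1. Then C_W(w) = C_{W_J}(w) ⋊ M, i.e., M is a complement of C_{W_J}(w) in C_W(w). -/

import Mathlib

/-!
If `x` centralizes `w`, let `g = x p` (`p ∈ W_J`) be of minimal length in the coset `x W_J`.
Then `g` has no right inversion in `W_J`, whereas every right inversion of
`u = g⁻¹ w g = p⁻¹ w p ∈ W_J` lies in `W_J`; hence conjugation by `g` maps the inversion set
`N(u)` into `g⁻¹ N(w) g`. As `ℓ w ≤ ℓ u` by minimality of `w` in its class, this is an equality,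
so `g⁻¹ N(w) g ⊆ W_J`. Since the inversions of `w` generate `W_J`, `g`, and then `x`, normalizes
`W_J`. So `C_W(w) ≤ N_W(W_J) = W_J M`, and Dedekind's modular law splits `C_W(w)`.

Inversions are handled through the parity `η(w, t)` of the number of occurrences of `t` in the
right inversion sequence of a word for `w`; it is independent of the word because it is read off
from an action of `W` on `W × ZMod 2` (Björner–Brenti, Theorem 1.4.3).
-/

open Pointwise

/-- The set `J(w)` of simple reflections occurring in a reduced expression for `w`. -/
def coxSupport {B W : Type*} [Group W] {M : CoxeterMatrix B}
    (cs : CoxeterSystem M W) (w : W) : Set B :=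
  {b : B | ∃ ω : List B, cs.IsReduced ω ∧ cs.wordProd ω = w ∧ b ∈ ω}

namespace CoxeterSystem

open List

variable {B W : Type*} [Group W] {M : CoxeterMatrix B} (cs : CoxeterSystem M W)

local prefix:100 "s " => cs.simple
local prefix:100 "π " => cs.wordProd
local prefix:100 "ℓ " => cs.length
local prefix:100 "ris " => cs.rightInvSeq
local prefix:100 "lis " => cs.leftInvSeq

theorem rightInvSeq_cons (i : B) (ω : List B) :
    ris (i :: ω) = (π ω)⁻¹ * s i * π ω :: ris ω := rfl

theorem prod_map_alternatingWord_two_mul {G : Type*} [Monoid G] (f : B → G) (i j : B) (p : ℕ) :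
    ((alternatingWord i j (2 * p)).map f).prod = (f i * f j) ^ p := by
  induction p with
  | zero => simp [alternatingWord]
  | succ p ih =>
    rw [mul_add_one, alternatingWord_succ', alternatingWord_succ', if_neg (by simp [parity_simps]),
      if_pos (by simp), map_cons, map_cons, prod_cons, prod_cons, ih, pow_succ', mul_assoc]

theorem reverse_alternatingWord_two_mul (i j : B) (p : ℕ) :
    (alternatingWord i j (2 * p)).reverse = alternatingWord j i (2 * p) := by
  refine List.ext_getElem (by simp) fun k hk _ => ?_
  simp only [length_reverse, length_alternatingWord] at hk
  rw [getElem_reverse, getElem_alternatingWord _ _ _ _ (by simp; omega),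
    getElem_alternatingWord _ _ _ _ hk]
  simp only [length_alternatingWord]
  split_ifs with h₁ h₂ h₂ <;> simp only [Nat.even_iff] at h₁ h₂ <;> first | rfl | omega

theorem leftInvSeq_alternatingWord_two_mul (i j : B) (p : ℕ) :
    lis (alternatingWord i j (2 * p)) =
      (range (2 * p)).map fun k => s i * (s j * s i) ^ k := by
  refine List.ext_getElem (by simp) fun k hk _ => ?_
  rw [getElem_leftInvSeq_alternatingWord cs i j p k (by simpa using hk),
    prod_alternatingWord_eq_mul_pow]
  have h : (2 * k + 1) / 2 = k := by omega
  simp [h]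

section InversionParity

variable [DecidableEq W]

theorem even_count_rightInvSeq_alternatingWord (i j : B) (t : W) :
    Even ((ris (alternatingWord i j (2 * M i j))).count t) := by
  rw [← reverse_alternatingWord_two_mul, rightInvSeq_reverse, count_reverse,
    leftInvSeq_alternatingWord_two_mul, two_mul, range_add, map_append, count_append, map_map]
  have hperiodic : (range (M i j)).map ((fun k => s j * (s i * s j) ^ k) ∘ (M i j + ·)) =
      (range (M i j)).map fun k => s j * (s i * s j) ^ k :=
    map_congr_left fun k _ => by simp [pow_add]
  rw [hperiodic]
  exact ⟨_, rfl⟩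

def reflSign (i : B) : Equiv.Perm (W × ZMod 2) :=
  Function.Involutive.toPerm (fun p => (s i * p.1 * s i, p.2 + if p.1 = s i then 1 else 0)) <| by
    rintro ⟨t, e⟩
    by_cases ht : t = s i
    · simp [ht, add_assoc, CharTwo.add_self_eq_zero]
    · simp [ht, mul_assoc, simple_mul_simple_cancel_left, mul_eq_one_iff_eq_inv]

theorem reflSign_apply (i : B) (t : W) (e : ZMod 2) :
    cs.reflSign i (t, e) = (s i * t * s i, e + if t = s i then 1 else 0) := rfl

theorem prod_map_reflSign_apply (ω : List B) (t : W) (e : ZMod 2) :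
    (ω.map cs.reflSign).prod (t, e) = (π ω * t * (π ω)⁻¹, e + (ris ω).count t) := by
  induction ω with
  | nil => simp
  | cons i ω ih =>
    have hconj : π ω * t * (π ω)⁻¹ = s i ↔ (π ω)⁻¹ * s i * π ω = t := by
      constructor <;> intro h <;> rw [← h] <;> group
    simp only [map_cons, prod_cons, Equiv.Perm.mul_apply, ih, reflSign_apply, rightInvSeq_cons,
      wordProd_cons, count_cons, beq_iff_eq, hconj]
    congr 1
    · simp only [mul_inv_rev, inv_simple]
      group
    · push_cast
      ring

theorem isLiftable_reflSign : M.IsLiftable cs.reflSign := fun i j => by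
  ext ⟨t, e⟩ : 1
  rw [← prod_map_alternatingWord_two_mul, prod_map_reflSign_apply]
  obtain ⟨c, hc⟩ := cs.even_count_rightInvSeq_alternatingWord i j t
  have hprod : π (alternatingWord i j (2 * M i j)) = 1 := by
    simp [prod_alternatingWord_eq_mul_pow]
  simp [hprod, hc, CharTwo.add_self_eq_zero]

def reflSignRep : W →* Equiv.Perm (W × ZMod 2) := cs.lift ⟨cs.reflSign, cs.isLiftable_reflSign⟩

theorem reflSignRep_wordProd (ω : List B) : cs.reflSignRep (π ω) = (ω.map cs.reflSign).prod := by
  rw [wordProd, map_list_prod, map_map]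
  congr 2
  funext i
  exact cs.lift_apply_simple cs.isLiftable_reflSign i

def inversionParity (w t : W) : ZMod 2 := (cs.reflSignRep w (t, 0)).2

theorem inversionParity_wordProd (ω : List B) (t : W) :
    cs.inversionParity (π ω) t = (ris ω).count t := by
  simp [inversionParity, reflSignRep_wordProd, prod_map_reflSign_apply]

theorem reflSignRep_apply (w t : W) (e : ZMod 2) :
    cs.reflSignRep w (t, e) = (w * t * w⁻¹, e + cs.inversionParity w t) := by
  obtain ⟨ω, rfl⟩ := cs.wordProd_surjective w
  rw [inversionParity_wordProd, reflSignRep_wordProd, prod_map_reflSign_apply]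

theorem inversionParity_mul (x y t : W) :
    cs.inversionParity (x * y) t = cs.inversionParity y t + cs.inversionParity x (y * t * y⁻¹) := by
  rw [inversionParity, map_mul, Equiv.Perm.mul_apply, reflSignRep_apply, reflSignRep_apply,
    zero_add]

theorem inversionParity_one (t : W) : cs.inversionParity 1 t = 0 := by
  simp [inversionParity]

theorem inversionParity_simple_self (i : B) : cs.inversionParity (s i) (s i) = 1 := by
  simpa using cs.inversionParity_wordProd [i] (s i)

variable {cs} in
theorem IsReflection.inversionParity_self {t : W} (ht : cs.IsReflection t) :
    cs.inversionParity t t = 1 := by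
  obtain ⟨q, i, rfl⟩ := ht
  have h₁ := cs.inversionParity_mul q q⁻¹ (q * s i * q⁻¹)
  have h₂ := cs.inversionParity_mul (q * s i) q⁻¹ (q * s i * q⁻¹)
  have h₃ := cs.inversionParity_mul q (s i) (s i)
  have hs : q⁻¹ * (q * s i * q⁻¹) * q⁻¹⁻¹ = s i := by group
  rw [mul_inv_cancel, inversionParity_one, hs] at h₁
  rw [hs] at h₂
  rw [inversionParity_simple_self, mul_inv_cancel_right] at h₃
  linear_combination h₂ + h₃ - h₁

theorem mem_rightInvSeq_of_inversionParity_eq_one {ω : List B} {t : W}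
    (h : cs.inversionParity (π ω) t = 1) : t ∈ ris ω := by
  rw [inversionParity_wordProd] at h
  exact count_pos_iff.1 (Nat.pos_of_ne_zero fun h₀ => by simp [h₀] at h)

theorem isRightInversion_of_inversionParity_eq_one {w t : W} (h : cs.inversionParity w t = 1) :
    cs.IsRightInversion w t := by
  obtain ⟨ω, hω, rfl⟩ := cs.exists_isReduced w
  exact cs.isRightInversion_of_mem_rightInvSeq hω (cs.mem_rightInvSeq_of_inversionParity_eq_one h)

theorem isRightInversion_iff_inversionParity_eq_one {w t : W} :
    cs.IsRightInversion w t ↔ cs.inversionParity w t = 1 := by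
  refine ⟨fun ht => ?_, cs.isRightInversion_of_inversionParity_eq_one⟩
  by_contra hne
  have hzero : cs.inversionParity w t = 0 := by
    generalize cs.inversionParity w t = a at hne
    revert a
    decide
  have hwt : cs.IsRightInversion (w * t) t := by
    apply cs.isRightInversion_of_inversionParity_eq_one
    rw [inversionParity_mul, ht.1.inversionParity_self, mul_inv_cancel_right, hzero, add_zero]
  have hlt := hwt.2
  rw [mul_assoc, ht.1.mul_self, mul_one] at hlt
  exact lt_asymm ht.2 hlt

end InversionParity

variable {cs} in
theorem IsRightInversion.mem_rightInvSeq {ω : List B} {t : W}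
    (ht : cs.IsRightInversion (π ω) t) : t ∈ ris ω := by
  classical
  exact cs.mem_rightInvSeq_of_inversionParity_eq_one
    (cs.isRightInversion_iff_inversionParity_eq_one.1 ht)

theorem isRightInversion_mul_iff (x y t : W) :
    cs.IsRightInversion (x * y) t ↔
      (cs.IsRightInversion y t ↔ ¬cs.IsRightInversion x (y * t * y⁻¹)) := by
  classical
  simp only [isRightInversion_iff_inversionParity_eq_one, inversionParity_mul]
  generalize cs.inversionParity y t = a
  generalize cs.inversionParity x (y * t * y⁻¹) = b
  revert a b
  decide

theorem setOf_isRightInversion_wordProd {ω : List B} (hω : cs.IsReduced ω) :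
    {t | cs.IsRightInversion (π ω) t} = {t | t ∈ ris ω} :=
  Set.ext fun _ => ⟨fun ht => ht.mem_rightInvSeq, cs.isRightInversion_of_mem_rightInvSeq hω⟩

theorem finite_setOf_isRightInversion (w : W) : {t | cs.IsRightInversion w t}.Finite := by
  obtain ⟨ω, hω, rfl⟩ := cs.exists_isReduced w
  rw [cs.setOf_isRightInversion_wordProd hω]
  exact (ris ω).finite_toSet

theorem ncard_setOf_isRightInversion (w : W) : {t | cs.IsRightInversion w t}.ncard = ℓ w := by
  classical
  obtain ⟨ω, hω, rfl⟩ := cs.exists_isReduced w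
  rw [cs.setOf_isRightInversion_wordProd hω, ← coe_toFinset, Set.ncard_coe_finset,
    toFinset_card_of_nodup hω.nodup_rightInvSeq, length_rightInvSeq, hω.eq]

theorem wordProd_mem_of_forall_simple_mem {H : Subgroup W} {ω : List B} (h : ∀ i ∈ ω, s i ∈ H) :
    π ω ∈ H :=
  H.list_prod_mem (by simpa using h)

theorem rightInvSeq_mem_of_forall_simple_mem {H : Subgroup W} {ω : List B}
    (h : ∀ i ∈ ω, s i ∈ H) {t : W} (ht : t ∈ ris ω) : t ∈ H := by
  induction ω with
  | nil => simp at ht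
  | cons i ω ih =>
    have hω : ∀ j ∈ ω, s j ∈ H := fun j hj => h j (mem_cons_of_mem i hj)
    rcases mem_cons.1 ht with rfl | ht
    · have hπ := cs.wordProd_mem_of_forall_simple_mem hω
      exact mul_mem (mul_mem (inv_mem hπ) (h i mem_cons_self)) hπ
    · exact ih hω ht

theorem simple_mem_of_forall_rightInvSeq_mem {H : Subgroup W} {ω : List B}
    (h : ∀ t ∈ ris ω, t ∈ H) : ∀ i ∈ ω, s i ∈ H := by
  induction ω with
  | nil => simp
  | cons j ω ih =>
    have hω := ih fun t ht => h t (mem_cons_of_mem _ ht)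
    have hπ := cs.wordProd_mem_of_forall_simple_mem hω
    have hj : s j ∈ H := by
      simpa [mul_assoc] using mul_mem (mul_mem hπ (h _ mem_cons_self)) (inv_mem hπ)
    simpa [hj] using hω

theorem exists_wordProd_eq_of_mem_closure_simple {S : Set B} {v : W}
    (hv : v ∈ Subgroup.closure (cs.simple '' S)) : ∃ ω : List B, (∀ i ∈ ω, i ∈ S) ∧ π ω = v := by
  induction hv using Subgroup.closure_induction with
  | mem _ hv =>
    obtain ⟨i, hi, rfl⟩ := hv
    exact ⟨[i], by simpa using hi, cs.wordProd_singleton i⟩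
  | one => exact ⟨[], by simp, cs.wordProd_nil⟩
  | mul _ _ _ _ h₁ h₂ =>
    obtain ⟨ω₁, hS₁, rfl⟩ := h₁
    obtain ⟨ω₂, hS₂, rfl⟩ := h₂
    exact ⟨ω₁ ++ ω₂, by simpa [or_imp, forall_and] using ⟨hS₁, hS₂⟩, cs.wordProd_append ω₁ ω₂⟩
  | inv _ _ h =>
    obtain ⟨ω, hS, rfl⟩ := h
    exact ⟨ω.reverse, by simpa using hS, cs.wordProd_reverse ω⟩

variable {cs} in
theorem IsRightInversion.mem_closure_simple {S : Set B} {v t : W}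
    (ht : cs.IsRightInversion v t) (hv : v ∈ Subgroup.closure (cs.simple '' S)) :
    t ∈ Subgroup.closure (cs.simple '' S) := by
  obtain ⟨ω, hS, rfl⟩ := cs.exists_wordProd_eq_of_mem_closure_simple hv
  exact cs.rightInvSeq_mem_of_forall_simple_mem
    (fun i hi => Subgroup.subset_closure (Set.mem_image_of_mem _ (hS i hi))) ht.mem_rightInvSeq

theorem mem_closure_simple_coxSupport (w : W) :
    w ∈ Subgroup.closure (cs.simple '' coxSupport cs w) := by
  obtain ⟨ω, hω, rfl⟩ := cs.exists_isReduced w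
  exact cs.wordProd_mem_of_forall_simple_mem fun i hi =>
    Subgroup.subset_closure ⟨i, ⟨ω, hω, rfl, hi⟩, rfl⟩

theorem closure_simple_coxSupport_le {w : W} {K : Subgroup W}
    (h : ∀ t, cs.IsRightInversion w t → t ∈ K) :
    Subgroup.closure (cs.simple '' coxSupport cs w) ≤ K := by
  rw [Subgroup.closure_le]
  rintro _ ⟨i, ⟨ω, hω, rfl, hi⟩, rfl⟩
  exact cs.simple_mem_of_forall_rightInvSeq_mem
    (fun t ht => h t (cs.isRightInversion_of_mem_rightInvSeq hω ht)) i hi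

theorem not_isRightInversion_of_forall_length_le_mul {H : Subgroup W} {g t : W}
    (hg : ∀ h ∈ H, ℓ g ≤ ℓ (g * h)) (ht : t ∈ H) : ¬cs.IsRightInversion g t :=
  fun hgt => (hg t ht).not_gt hgt.2

theorem conj_mem_closure_simple_of_isRightInversion {S : Set B} {g w r : W}
    (hg : ∀ h ∈ Subgroup.closure (cs.simple '' S), ℓ g ≤ ℓ (g * h))
    (hu : g⁻¹ * w * g ∈ Subgroup.closure (cs.simple '' S)) (hlen : ℓ w ≤ ℓ (g⁻¹ * w * g))
    (hr : cs.IsRightInversion w r) : g⁻¹ * r * g ∈ Subgroup.closure (cs.simple '' S) := by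
  set u := g⁻¹ * w * g
  have hsub : {t | cs.IsRightInversion u t} ⊆
      (fun r => g⁻¹ * r * g) '' {r | cs.IsRightInversion w r} := by
    intro t (ht : cs.IsRightInversion u t)
    have htH := ht.mem_closure_simple hu
    have hgu : cs.IsRightInversion (g * u) t :=
      (cs.isRightInversion_mul_iff g u t).2 <| iff_of_true ht <|
        cs.not_isRightInversion_of_forall_length_le_mul hg
          (mul_mem (mul_mem hu htH) (inv_mem hu))
    have hwg : cs.IsRightInversion (w * g) t := by
      simpa [u, mul_assoc] using hgu
    have hng := cs.not_isRightInversion_of_forall_length_le_mul hg htH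
    exact ⟨g * t * g⁻¹, not_not.1 (mt ((cs.isRightInversion_mul_iff w g t).1 hwg).2 hng),
      by group⟩
  have hinj : Function.Injective fun r => g⁻¹ * r * g := fun a b h => by simpa using h
  have hcard : ((fun r => g⁻¹ * r * g) '' {r | cs.IsRightInversion w r}).ncard ≤
      {t | cs.IsRightInversion u t}.ncard := by
    rwa [Set.ncard_image_of_injective _ hinj, ncard_setOf_isRightInversion,
      ncard_setOf_isRightInversion]
  have heq := Set.eq_of_subset_of_ncard_le hsub hcard
    ((cs.finite_setOf_isRightInversion w).image _)
  have hur : g⁻¹ * r * g ∈ {t | cs.IsRightInversion u t} := heq ▸ Set.mem_image_of_mem _ hr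
  exact IsRightInversion.mem_closure_simple hur hu

theorem centralizer_le_normalizer_closure_simple_coxSupport [Finite W] {w : W}
    (hmin : ∀ v : W, ℓ w ≤ ℓ (v⁻¹ * w * v)) :
    Subgroup.centralizer {w} ≤
      Subgroup.normalizer (Subgroup.closure (cs.simple '' coxSupport cs w) : Set W) := by
  intro x hx
  set H := Subgroup.closure (cs.simple '' coxSupport cs w)
  obtain ⟨p, hp, hpmin⟩ := (H : Set W).exists_min_image (fun p => ℓ (x * p)) (Set.toFinite _)
    ⟨1, H.one_mem⟩
  set g := x * p
  have hg : ∀ h ∈ H, ℓ g ≤ ℓ (g * h) := fun h hh => by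
    simpa only [g, mul_assoc] using hpmin _ (mul_mem hp hh)
  have hu : g⁻¹ * w * g = p⁻¹ * w * p := by
    have hxw : x⁻¹ * w * x = w := by
      rw [mul_assoc, ← Subgroup.mem_centralizer_singleton_iff.1 hx, inv_mul_cancel_left]
    calc g⁻¹ * w * g = p⁻¹ * (x⁻¹ * w * x) * p := by simp only [g]; group
      _ = p⁻¹ * w * p := by rw [hxw]
  have huH : g⁻¹ * w * g ∈ H :=
    hu ▸ mul_mem (mul_mem (inv_mem hp) (cs.mem_closure_simple_coxSupport w)) hp
  have hconj : H ≤ H.comap (MulAut.conj g⁻¹).toMonoidHom :=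
    cs.closure_simple_coxSupport_le fun r hr => by
      simpa using cs.conj_mem_closure_simple_of_isRightInversion hg huH (hu ▸ hmin p) hr
  have hgN : g⁻¹ ∈ Subgroup.normalizer (H : Set W) :=
    Subgroup.mem_normalizer_fintype fun h hh => hconj hh
  simpa [g] using mul_mem (inv_mem hgN) (inv_mem (Subgroup.le_normalizer hp))

end CoxeterSystem

theorem stmt_19_general {B W : Type*} [Group W] [Finite W] {M : CoxeterMatrix B}
    (cs : CoxeterSystem M W) (w : W)
    (hmin : ∀ v : W, cs.length w ≤ cs.length (v⁻¹ * w * v))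
    (WJ : Subgroup W) (hWJ : WJ = Subgroup.closure (cs.simple '' coxSupport cs w))
    (Cmpl : Subgroup W)
    (hM2 : ∀ x ∈ Cmpl, x * w = w * x)
    (hM3 : (WJ : Set W) * (Cmpl : Set W) = (Subgroup.normalizer (WJ : Set W) : Set W))
    (hM4 : WJ ⊓ Cmpl = ⊥) :
    ((Subgroup.centralizer {w} ⊓ WJ : Subgroup W) : Set W) * (Cmpl : Set W) =
        (Subgroup.centralizer {w} : Set W) ∧
      (Subgroup.centralizer {w} ⊓ WJ) ⊓ Cmpl = ⊥ := by
  have hC : Cmpl ≤ Subgroup.centralizer {w} := fun x hx =>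
    Subgroup.mem_centralizer_singleton_iff.2 (hM2 x hx)
  refine ⟨?_, eq_bot_mono (inf_le_inf_right _ inf_le_right) hM4⟩
  rw [Subgroup.inf_mul_assoc _ _ _ hC, hM3, Set.inter_eq_left, hWJ]
  exact cs.centralizer_le_normalizer_closure_simple_coxSupport hmin

/-- Let `w` be of minimal length in its conjugacy class, `J = J(w)`, and let
`M ≤ N_W(W_J)` centralize `w` with `W_J M = N_W(W_J)` and `M ⊓ W_J = ⊥`.
Then `C_W(w) = C_{W_J}(w) ⋊ M`. -/
theorem stmt_19 {B W : Type*} [Group W] [Finite W] {M : CoxeterMatrix B}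
    (cs : CoxeterSystem M W) (w : W)
    (hmin : ∀ v : W, cs.length w ≤ cs.length (v⁻¹ * w * v))
    (WJ : Subgroup W) (hWJ : WJ = Subgroup.closure (cs.simple '' coxSupport cs w))
    (Cmpl : Subgroup W)
    (hM1 : Cmpl ≤ Subgroup.normalizer (WJ : Set W))
    (hM2 : ∀ x ∈ Cmpl, x * w = w * x)
    (hM3 : (WJ : Set W) * (Cmpl : Set W) = (Subgroup.normalizer (WJ : Set W) : Set W))
    (hM4 : WJ ⊓ Cmpl = ⊥) :
    ((Subgroup.centralizer {w} ⊓ WJ : Subgroup W) : Set W) * (Cmpl : Set W) =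
        (Subgroup.centralizer {w} : Set W) ∧
      (Subgroup.centralizer {w} ⊓ WJ) ⊓ Cmpl = ⊥ :=
  stmt_19_general cs w hmin WJ hWJ Cmpl hM2 hM3 hM4
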